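/- Let m, n ≥ 1 be positive integers and R = R_1 × ⋯ × R_m × F_1 × ⋯ × F_n, where each R_i is a commutative Artinian local principal ideal ring that is not a field and each F_j is a field. Let I and J be distinct non-trivial ideals of R, with components over all m + n factors. If I and J have the same zero-pattern (for every factor index k, the k-th component of I is 0 if and only if the k-th component of J is 0), then I and J are mutually maximally distant in G(R). If I and J have different zero-patterns, then I and J are mutually maximally distant in G(R) if and only if I ∩ J = 0. -/

import Mathlib

open SimpleGraph

/-- The type of non-trivial ideals of a commutative ring `R`
(ideals `I` with `I ≠ 0` and `I ≠ R`). -/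
abbrev NontrivialIdeal (R : Type*) [CommRing R] : Type _ :=
  {I : Ideal R // I ≠ ⊥ ∧ I ≠ ⊤}

/-- The intersection graph of ideals of `R`: vertices are the non-trivial ideals,
and distinct vertices are adjacent iff their intersection is non-zero. -/
def intersectionGraph (R : Type*) [CommRing R] : SimpleGraph (NontrivialIdeal R) where
  Adj I J := I ≠ J ∧ I.1 ⊓ J.1 ≠ ⊥
  symm := ⟨fun I J h => ⟨h.1.symm, by rw [inf_comm]; exact h.2⟩⟩
  loopless := ⟨fun I h => h.1 rfl⟩

/-- Two distinct vertices `u, v` are mutually maximally distant if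
`d(v,w) ≤ d(u,v)` for every neighbour `w` of `u` and
`d(u,w) ≤ d(u,v)` for every neighbour `w` of `v`. -/
def MutuallyMaximallyDistant {V : Type*} (G : SimpleGraph V) (u v : V) : Prop :=
  u ≠ v ∧ (∀ w, G.Adj u w → G.edist v w ≤ G.edist u v) ∧
    (∀ w, G.Adj v w → G.edist u w ≤ G.edist u v)

theorem MutuallyMaximallyDistant.symm {V : Type*} {G : SimpleGraph V} {u v : V}
    (h : MutuallyMaximallyDistant G u v) : MutuallyMaximallyDistant G v u :=
  ⟨h.1.symm,
    fun w hw => by rw [show G.edist v u = G.edist u v from G.edist_comm]; exact h.2.2 w hw,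
    fun w hw => by rw [show G.edist v u = G.edist u v from G.edist_comm]; exact h.2.1 w hw⟩

/-- The strong resolving graph of `G`: `u` and `v` are adjacent iff they are
mutually maximally distant. -/
def strongResolvingGraph {V : Type*} (G : SimpleGraph V) : SimpleGraph V where
  Adj := MutuallyMaximallyDistant G
  symm := ⟨fun _ _ h => h.symm⟩
  loopless := ⟨fun _ h => h.1 rfl⟩

/-- A vertex `w` strongly resolves `u` and `v` if `d(w,u) = d(w,v) + d(v,u)` or
`d(w,v) = d(w,u) + d(u,v)`. A set `W` is a strong resolving set if every two distinct
vertices are strongly resolved by some member of `W`. -/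
def IsStrongResolvingSet {V : Type*} (G : SimpleGraph V) (W : Set V) : Prop :=
  ∀ u v : V, u ≠ v → ∃ w ∈ W,
    G.edist w u = G.edist w v + G.edist v u ∨ G.edist w v = G.edist w u + G.edist u v

/-- The product ideal which is `Rᵢ` in the components where `I` is zero and `0` elsewhere. -/
def complIdeal {ι : Type*} (F : ι → Type*) [∀ i, CommRing (F i)] (I : Ideal (∀ i, F i)) :
    Ideal (∀ i, F i) where
  carrier := {x | ∀ i, I.map (Pi.evalRingHom F i) ≠ ⊥ → x i = 0}
  zero_mem' := fun i _ => rfl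
  add_mem' := fun hx hy i hi => by
    simp only [Pi.add_apply, hx i hi, hy i hi, add_zero]
  smul_mem' := fun c x hx i hi => by
    simp only [Pi.smul_apply, smul_eq_mul, Pi.mul_apply, hx i hi, mul_zero]

/-! ### Auxiliary lemmas -/

/-!
Every factor is uniserial (its ideals form a chain, i.e. it is a `PreValuationRing`): this is
clear for fields, and in an Artinian local principal ideal ring every nonzero element is
associated to a power of a generator of the nilpotent maximal ideal. Hence two ideals of the
product meet iff their supports (the complements of their zero-patterns) meet.

Ideals with the same support thus have the same neighbours, so they are mutually maximally
distant. The preimage of the maximal ideal of a non-field factor has full support, so it is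
adjacent to every other vertex and the graph has diameter at most `2`; non-adjacent vertices
are therefore mutually maximally distant. Conversely, if `I` and `J` meet but some index lies in
the support of `J` only, the ideal that is the whole factor exactly off the support of `I`
is a neighbour of `J` at distance `2` from `I`.
-/

open IsLocalRing

theorem IsLocalRing.exists_associated_pow_of_maximalIdeal_eq_span {R : Type*} [CommRing R]
    [IsLocalRing R] {t : R} (ht : maximalIdeal R = Ideal.span {t}) (hnil : IsNilpotent t)
    {x : R} (hx : x ≠ 0) : ∃ i : ℕ, Associated (t ^ i) x := by
  obtain ⟨s, hs⟩ := hnil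
  have hfin : FiniteMultiplicity t x := ⟨s, fun ⟨c, hc⟩ => hx <| by
    rw [hc, pow_succ', mul_assoc, hs, zero_mul, mul_zero]⟩
  obtain ⟨c, hxc, hc⟩ := hfin.exists_eq_pow_mul_and_not_dvd
  have hcu : IsUnit c := by
    by_contra h
    exact hc (Ideal.mem_span_singleton.mp (ht ▸ (mem_maximalIdeal c).mpr h))
  exact ⟨_, hcu.unit, hxc.symm⟩

theorem PreValuationRing.of_maximalIdeal_eq_span {R : Type*} [CommRing R] [IsLocalRing R]
    {t : R} (ht : maximalIdeal R = Ideal.span {t}) (hnil : IsNilpotent t) :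
    PreValuationRing R := by
  refine PreValuationRing.iff_dvd_total.mpr ⟨fun x y => ?_⟩
  rcases eq_or_ne x 0 with rfl | hx
  · exact Or.inr (dvd_zero y)
  rcases eq_or_ne y 0 with rfl | hy
  · exact Or.inl (dvd_zero x)
  obtain ⟨i, hi⟩ := exists_associated_pow_of_maximalIdeal_eq_span ht hnil hx
  obtain ⟨j, hj⟩ := exists_associated_pow_of_maximalIdeal_eq_span ht hnil hy
  rw [← hi.dvd_iff_dvd_left, ← hi.dvd_iff_dvd_right, ← hj.dvd_iff_dvd_left,
    ← hj.dvd_iff_dvd_right]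
  exact (le_total i j).imp (pow_dvd_pow t) (pow_dvd_pow t)

theorem PreValuationRing.of_isArtinianRing (R : Type*) [CommRing R] [IsArtinianRing R]
    [IsLocalRing R] [IsPrincipalIdealRing R] : PreValuationRing R := by
  obtain ⟨t, ht⟩ := (IsPrincipalIdealRing.principal (maximalIdeal R)).principal
  exact .of_maximalIdeal_eq_span ht
    (Ring.KrullDimLE.isNilpotent_iff_mem_maximalIdeal.mpr (ht ▸ Ideal.mem_span_singleton_self t))

theorem PreValuationRing.of_isField {R : Type*} [CommRing R] (h : IsField R) :
    PreValuationRing R :=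
  let := h.toField
  inferInstance

namespace SimpleGraph

variable {V : Type*} {G : SimpleGraph V} {u v : V}

theorem mutuallyMaximallyDistant_of_edist_le_one (huv : u ≠ v)
    (hu : ∀ w, G.Adj u w → G.edist v w ≤ 1) (hv : ∀ w, G.Adj v w → G.edist u w ≤ 1) :
    MutuallyMaximallyDistant G u v :=
  have h : 1 ≤ G.edist u v := Order.one_le_iff_pos.mpr (edist_pos_of_ne huv)
  ⟨huv, fun w hw => (hu w hw).trans h, fun w hw => (hv w hw).trans h⟩

theorem mutuallyMaximallyDistant_of_forall_edist_le (huv : u ≠ v)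
    (h : ∀ x y, G.edist x y ≤ G.edist u v) : MutuallyMaximallyDistant G u v :=
  ⟨huv, fun w _ => h v w, fun w _ => h u w⟩

end SimpleGraph

section IntersectionGraph

variable {R : Type*} [CommRing R]

theorem intersectionGraph_edist_le_one_iff {I J : NontrivialIdeal R} :
    (intersectionGraph R).edist I J ≤ 1 ↔ I.1 ⊓ J.1 ≠ ⊥ := by
  rw [SimpleGraph.edist_le_one_iff_adj_or_eq]
  constructor
  · rintro (h | rfl)
    · exact h.2
    · rw [inf_idem]; exact I.2.1
  · intro h
    by_cases hIJ : I = J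
    · exact Or.inr hIJ
    · exact Or.inl ⟨hIJ, h⟩

theorem intersectionGraph_two_le_edist {I J : NontrivialIdeal R} (h : I.1 ⊓ J.1 = ⊥) :
    2 ≤ (intersectionGraph R).edist I J := by
  have : 1 < (intersectionGraph R).edist I J := by
    rw [← not_le, intersectionGraph_edist_le_one_iff, not_not]; exact h
  exact Order.add_one_le_of_lt this

theorem intersectionGraph_edist_le_two (K : NontrivialIdeal R)
    (hK : ∀ L : NontrivialIdeal R, L.1 ⊓ K.1 ≠ ⊥) (I J : NontrivialIdeal R) :
    (intersectionGraph R).edist I J ≤ 2 :=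
  calc (intersectionGraph R).edist I J
      ≤ (intersectionGraph R).edist I K + (intersectionGraph R).edist K J :=
        SimpleGraph.edist_triangle
    _ ≤ 1 + 1 := by
        gcongr
        · exact intersectionGraph_edist_le_one_iff.mpr (hK I)
        · exact intersectionGraph_edist_le_one_iff.mpr (inf_comm J.1 K.1 ▸ hK J)
    _ = 2 := one_add_one_eq_two

end IntersectionGraph

namespace Ideal

variable {ι : Type*} {F : ι → Type*} [∀ i, CommRing (F i)]

/-- The complement of the zero-pattern of `I`. -/
def piSupport (I : Ideal (∀ i, F i)) : Set ι :=
  {k | I.map (Pi.evalRingHom F k) ≠ ⊥}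

theorem mem_piSupport {I : Ideal (∀ i, F i)} {k : ι} :
    k ∈ I.piSupport ↔ ∃ x ∈ I, x k ≠ 0 := by
  simp [piSupport, map_eq_bot_iff_le_ker, SetLike.not_le_iff_exists, RingHom.mem_ker]

theorem ne_bot_of_mem_piSupport {I : Ideal (∀ i, F i)} {k : ι} (hk : k ∈ I.piSupport) :
    I ≠ ⊥ :=
  fun h => hk (h ▸ map_bot)

theorem piSupport_nonempty {I : Ideal (∀ i, F i)} (hI : I ≠ ⊥) : I.piSupport.Nonempty := by
  obtain ⟨x, hx, hx0⟩ := (Submodule.ne_bot_iff I).mp hI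
  obtain ⟨k, hk⟩ := Function.ne_iff.mp hx0
  exact ⟨k, mem_piSupport.mpr ⟨x, hx, hk⟩⟩

theorem single_mul_apply_mem [DecidableEq ι] {I : Ideal (∀ i, F i)} {x : ∀ i, F i}
    (hx : x ∈ I) (k : ι) (a : F k) : Pi.single k (a * x k) ∈ I := by
  rw [Pi.single_mul_left]
  exact I.mul_mem_left _ hx

theorem inf_ne_bot_of_mem_piSupport [DecidableEq ι] [∀ i, PreValuationRing (F i)]
    {I J : Ideal (∀ i, F i)} {k : ι} (hI : k ∈ I.piSupport) (hJ : k ∈ J.piSupport) :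
    I ⊓ J ≠ ⊥ := by
  obtain ⟨x, hx, hxk⟩ := mem_piSupport.mp hI
  obtain ⟨y, hy, hyk⟩ := mem_piSupport.mp hJ
  wlog hdvd : x k ∣ y k generalizing I J x y
  · rw [inf_comm]
    exact this hJ hI y hy hyk x hx hxk ((ValuationRing.dvd_total (x k) (y k)).resolve_left hdvd)
  obtain ⟨c, hc⟩ := hdvd
  have hI' : Pi.single k (y k) ∈ I := hc ▸ mul_comm c (x k) ▸ single_mul_apply_mem hx k c
  have hJ' : Pi.single k (y k) ∈ J := one_mul (y k) ▸ single_mul_apply_mem hy k 1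
  exact (Submodule.ne_bot_iff _).mpr ⟨_, ⟨hI', hJ'⟩, Pi.single_ne_zero_iff.mpr hyk⟩

theorem inf_ne_bot_iff_piSupport [DecidableEq ι] [∀ i, PreValuationRing (F i)]
    {I J : Ideal (∀ i, F i)} : I ⊓ J ≠ ⊥ ↔ (I.piSupport ∩ J.piSupport).Nonempty := by
  refine ⟨fun h => ?_, fun ⟨k, hI, hJ⟩ => inf_ne_bot_of_mem_piSupport hI hJ⟩
  obtain ⟨k, hk⟩ := piSupport_nonempty h
  obtain ⟨x, hx, hxk⟩ := mem_piSupport.mp hk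
  exact ⟨k, mem_piSupport.mpr ⟨x, hx.1, hxk⟩, mem_piSupport.mpr ⟨x, hx.2, hxk⟩⟩

theorem piSupport_comap_evalRingHom [∀ i, Nontrivial (F i)] {i₀ : ι} {P : Ideal (F i₀)}
    (hP : P ≠ ⊥) : (P.comap (Pi.evalRingHom F i₀)).piSupport = Set.univ := by
  classical
  obtain ⟨a, ha, ha0⟩ := (Submodule.ne_bot_iff P).mp hP
  refine Set.eq_univ_of_forall fun k => mem_piSupport.mpr ⟨Function.update 1 i₀ a, ?_, ?_⟩
  · simpa [mem_comap] using ha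
  · rcases eq_or_ne k i₀ with rfl | hk
    · simpa using ha0
    · simp [Function.update_of_ne hk]

theorem complIdeal_inf_eq_bot (I : Ideal (∀ i, F i)) : complIdeal F I ⊓ I = ⊥ := by
  refine (Submodule.eq_bot_iff _).mpr fun x ⟨hxc, hxI⟩ => funext fun k => ?_
  by_cases hk : k ∈ I.piSupport
  · exact hxc k hk
  · by_contra hxk
    exact hk (mem_piSupport.mpr ⟨x, hxI, hxk⟩)

theorem complIdeal_ne_top {I : Ideal (∀ i, F i)} (hI : I ≠ ⊥) : complIdeal F I ≠ ⊤ := by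
  intro h
  apply hI
  rw [← complIdeal_inf_eq_bot I, h, top_inf_eq]

theorem complIdeal_inf_ne_bot [DecidableEq ι] {I J : Ideal (∀ i, F i)} {k : ι}
    (hI : k ∉ I.piSupport) (hJ : k ∈ J.piSupport) : complIdeal F I ⊓ J ≠ ⊥ := by
  obtain ⟨y, hy, hyk⟩ := mem_piSupport.mp hJ
  have hc : Pi.single k (y k) ∈ complIdeal F I := fun i hi => by
    rcases eq_or_ne i k with rfl | hik
    · exact absurd hi hI
    · exact Pi.single_eq_of_ne hik _
  have hJ' : Pi.single k (y k) ∈ J := one_mul (y k) ▸ single_mul_apply_mem hy k 1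
  exact (Submodule.ne_bot_iff _).mpr ⟨_, ⟨hc, hJ'⟩, Pi.single_ne_zero_iff.mpr hyk⟩

end Ideal

section ProductOfUniserial

open Ideal

variable {ι : Type*} [DecidableEq ι] {F : ι → Type*} [∀ i, CommRing (F i)]

theorem mutuallyMaximallyDistant_of_piSupport_eq [∀ i, PreValuationRing (F i)]
    {I J : NontrivialIdeal (∀ i, F i)} (hIJ : I ≠ J) (h : I.1.piSupport = J.1.piSupport) :
    MutuallyMaximallyDistant (intersectionGraph (∀ i, F i)) I J := by
  have hnbhd : ∀ {L M : NontrivialIdeal (∀ i, F i)}, L.1.piSupport = M.1.piSupport →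
      ∀ w, (intersectionGraph _).Adj L w → (intersectionGraph _).edist M w ≤ 1 :=
    fun h w hw => intersectionGraph_edist_le_one_iff.mpr
      (inf_ne_bot_iff_piSupport.mpr (h ▸ inf_ne_bot_iff_piSupport.mp hw.2))
  exact SimpleGraph.mutuallyMaximallyDistant_of_edist_le_one hIJ (hnbhd h) (hnbhd h.symm)

theorem inf_eq_bot_of_mutuallyMaximallyDistant {I J : NontrivialIdeal (∀ i, F i)} {k : ι}
    (hI : k ∉ I.1.piSupport) (hJ : k ∈ J.1.piSupport)
    (h : MutuallyMaximallyDistant (intersectionGraph (∀ i, F i)) I J) : I.1 ⊓ J.1 = ⊥ := by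
  by_contra hIJ
  have hWJ := complIdeal_inf_ne_bot hI hJ
  let W : NontrivialIdeal (∀ i, F i) :=
    ⟨complIdeal F I.1, ne_bot_of_le_ne_bot hWJ inf_le_left, complIdeal_ne_top I.2.1⟩
  have hJW : (intersectionGraph _).Adj J W := by
    refine ⟨fun hJW => hIJ ?_, inf_comm J.1 W.1 ▸ hWJ⟩
    rw [hJW, inf_comm]
    exact complIdeal_inf_eq_bot I.1
  have hIW : I.1 ⊓ W.1 ≠ ⊥ :=
    intersectionGraph_edist_le_one_iff.mp
      ((h.2.2 W hJW).trans (intersectionGraph_edist_le_one_iff.mpr hIJ))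
  exact hIW (inf_comm I.1 W.1 ▸ complIdeal_inf_eq_bot I.1)

theorem inf_eq_bot_of_mutuallyMaximallyDistant_of_piSupport_ne {I J : NontrivialIdeal (∀ i, F i)}
    (hIJ : I.1.piSupport ≠ J.1.piSupport)
    (h : MutuallyMaximallyDistant (intersectionGraph (∀ i, F i)) I J) : I.1 ⊓ J.1 = ⊥ := by
  obtain ⟨k, hk⟩ := not_forall.mp (mt Set.ext hIJ)
  by_cases hI : k ∈ I.1.piSupport
  · have hJ : k ∉ J.1.piSupport := fun hJ => hk (iff_of_true hI hJ)
    rw [inf_comm]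
    exact inf_eq_bot_of_mutuallyMaximallyDistant hJ hI h.symm
  · have hJ : k ∈ J.1.piSupport := by_contra fun hJ => hk (iff_of_false hI hJ)
    exact inf_eq_bot_of_mutuallyMaximallyDistant hI hJ h

end ProductOfUniserial

theorem statement15_general (m n : ℕ) (hm : 1 ≤ m)
    (A : Fin m ⊕ Fin n → Type*) [∀ k, CommRing (A k)]
    (hart : ∀ i : Fin m, IsArtinianRing (A (Sum.inl i)))
    (hloc : ∀ i : Fin m, IsLocalRing (A (Sum.inl i)))
    (hpir : ∀ i : Fin m, IsPrincipalIdealRing (A (Sum.inl i)))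
    (hnf : ∀ i : Fin m, ¬ IsField (A (Sum.inl i)))
    (hfield : ∀ j : Fin n, IsField (A (Sum.inr j)))
    (I J : NontrivialIdeal (∀ k, A k)) (hIJ : I ≠ J) :
    ((∀ k, I.1.map (Pi.evalRingHom A k) = ⊥ ↔ J.1.map (Pi.evalRingHom A k) = ⊥) →
        MutuallyMaximallyDistant (intersectionGraph (∀ k, A k)) I J) ∧
      ((∃ k, ¬ (I.1.map (Pi.evalRingHom A k) = ⊥ ↔ J.1.map (Pi.evalRingHom A k) = ⊥)) →
        (MutuallyMaximallyDistant (intersectionGraph (∀ k, A k)) I J ↔ I.1 ⊓ J.1 = ⊥)) := by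
  classical
  have hval : ∀ k, PreValuationRing (A k)
    | .inl i => PreValuationRing.of_isArtinianRing _
    | .inr j => PreValuationRing.of_isField (hfield j)
  have hnt : ∀ k, Nontrivial (A k)
    | .inl i => (hloc i).toNontrivial
    | .inr j => ⟨(hfield j).exists_pair_ne⟩
  let i₀ : Fin m := ⟨0, hm⟩
  have hP : maximalIdeal (A (.inl i₀)) ≠ ⊥ := fun h =>
    hnf i₀ (isField_iff_maximalIdeal_eq.mpr h)
  have hK := Ideal.piSupport_comap_evalRingHom (F := A) hP
  let K : NontrivialIdeal (∀ k, A k) :=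
    ⟨_, Ideal.ne_bot_of_mem_piSupport (hK ▸ Set.mem_univ (Sum.inl i₀)),
      Ideal.comap_ne_top _ (Ideal.IsMaximal.ne_top inferInstance)⟩
  have hdiam := intersectionGraph_edist_le_two K fun L => Ideal.inf_ne_bot_iff_piSupport.mpr
    (by rw [hK, Set.inter_univ]; exact Ideal.piSupport_nonempty L.2.1)
  refine ⟨fun h => mutuallyMaximallyDistant_of_piSupport_eq hIJ
      (Set.ext fun k => not_congr (h k)), fun ⟨k, hk⟩ => ⟨fun hmmd => ?_, fun h => ?_⟩⟩
  · exact inf_eq_bot_of_mutuallyMaximallyDistant_of_piSupport_ne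
      (fun h => hk (not_iff_not.mp (Set.ext_iff.mp h k))) hmmd
  · exact SimpleGraph.mutuallyMaximallyDistant_of_forall_edist_le hIJ fun u v =>
      (hdiam u v).trans (intersectionGraph_two_le_edist h)

theorem statement15 (m n : ℕ) (hm : 1 ≤ m) (hn : 1 ≤ n)
    (A : Fin m ⊕ Fin n → Type*) [∀ k, CommRing (A k)]
    (hart : ∀ i : Fin m, IsArtinianRing (A (Sum.inl i)))
    (hloc : ∀ i : Fin m, IsLocalRing (A (Sum.inl i)))
    (hpir : ∀ i : Fin m, IsPrincipalIdealRing (A (Sum.inl i)))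
    (hnf : ∀ i : Fin m, ¬ IsField (A (Sum.inl i)))
    (hfield : ∀ j : Fin n, IsField (A (Sum.inr j)))
    (I J : NontrivialIdeal (∀ k, A k)) (hIJ : I ≠ J) :
    ((∀ k, I.1.map (Pi.evalRingHom A k) = ⊥ ↔ J.1.map (Pi.evalRingHom A k) = ⊥) →
        MutuallyMaximallyDistant (intersectionGraph (∀ k, A k)) I J) ∧
      ((∃ k, ¬ (I.1.map (Pi.evalRingHom A k) = ⊥ ↔ J.1.map (Pi.evalRingHom A k) = ⊥)) →
        (MutuallyMaximallyDistant (intersectionGraph (∀ k, A k)) I J ↔ I.1 ⊓ J.1 = ⊥)) :=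
  statement15_general m n hm A hart hloc hpir hnf hfield I J hIJ
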